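/- For a product state ρ_A ⊗ ρ_B on a bipartite system, the l1-norm of coherence satisfies C_{l1}(ρ_A ⊗ ρ_B) + 1 = (C_{l1}(ρ_A) + 1)(C_{l1}(ρ_B) + 1), where coherence is measured in the product basis. -/

import Mathlib

open Matrix Kronecker
open scoped ComplexOrder

/-- The `l₁`-norm of coherence of a state in the standard (reference) basis:
`C_{l₁}(ρ) = ∑_{i≠j} |ρ_{ij}| = ∑_{i,j} |ρ_{ij}| - 1` (for a density matrix, whose
diagonal entries are nonnegative reals summing to 1). -/
noncomputable def Cl1 {n : Type*} [Fintype n] (ρ : Matrix n n ℂ) : ℝ :=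
  (∑ i, ∑ j, ‖ρ i j‖) - 1

theorem Cl1_add_one {n : Type*} [Fintype n] (ρ : Matrix n n ℂ) :
    Cl1 ρ + 1 = ∑ i, ∑ j, ‖ρ i j‖ :=
  sub_add_cancel _ _

theorem Matrix.sum_norm_kronecker {α l m n p : Type*} [Norm α] [Mul α] [NormMulClass α]
    [Fintype l] [Fintype m] [Fintype n] [Fintype p] (A : Matrix l m α) (B : Matrix n p α) :
    ∑ i, ∑ j, ‖(A ⊗ₖ B) i j‖ = (∑ i, ∑ j, ‖A i j‖) * ∑ i, ∑ j, ‖B i j‖ := by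
  simp only [kroneckerMap_apply, norm_mul, Fintype.sum_prod_type, Finset.sum_mul_sum]

theorem stmt_0 {m n : Type*} [Fintype m] [Fintype n]
    (ρA : Matrix m m ℂ) (ρB : Matrix n n ℂ) :
    Cl1 (ρA ⊗ₖ ρB) + 1 = (Cl1 ρA + 1) * (Cl1 ρB + 1) := by
  rw [Cl1_add_one, Cl1_add_one, Cl1_add_one, sum_norm_kronecker]
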